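/- For every q ≥ 1 and every k, the elements F(e^{i₁} ∧ e^{i₂} ∧ ⋯ ∧ e^{i_q}, e^{i_q}) with 2 ≤ i₁ < i₂ < ⋯ < i_q and i₁ + i₂ + ⋯ + i_q + i_q + 1 = k form a basis of the kernel of the restriction of D to Λ^{q+1}_k(h*); moreover, the kernel of the restriction of D to h* = Λ¹(h*) is spanned by e². -/

import Mathlib

set_option maxSynthPendingDepth 3

/-- The field `ℤ₂ = ℤ/2ℤ`. -/
abbrev K2 : Type := ZMod 2

/-- The exterior algebra over `ℤ₂` on generators `e 1, e 2, …`, realized as the free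
`ℤ₂`-module on the square-free monomials `e^S`, indexed by finite sets `S` of indices
(over `ℤ₂` all signs are trivial). -/
abbrev Lam : Type := Finset ℕ →₀ K2

/-- The generator `eⁱ` (the `i`-th dual basis vector). -/
noncomputable def e (i : ℕ) : Lam := Finsupp.single {i} 1

/-- The wedge product: on monomials, `e^S ∧ e^T = e^(S ∪ T)` if `S` and `T` are disjoint and `0`
otherwise (there are no signs over `ℤ₂`); extended bilinearly. -/
noncomputable def wedge (x y : Lam) : Lam :=
  x.sum fun S a => y.sum fun T b =>
    if Disjoint S T then Finsupp.single (S ∪ T) (a * b) else 0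

/-- A derivation of the exterior algebra (over `ℤ₂` all signs are trivial, so the relevant
operators are ordinary derivations). -/
def IsDerivation (D : Module.End K2 Lam) : Prop :=
  ∀ x y : Lam, D (wedge x y) = wedge (D x) y + wedge x (D y)

/-- The subalgebra `Λ(span (eⁱ : i ∈ I))` of the exterior algebra: the span of the monomials
`e^S` with all indices in `I`. -/
noncomputable def lamOn (I : Set ℕ) : Submodule K2 Lam :=
  Submodule.span K2 {x | ∃ S : Finset ℕ, ↑S ⊆ I ∧ x = Finsupp.single S (1 : K2)}

/-- `Λ^q`: the span of the monomials of rank `q` with indices in `I`. -/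
noncomputable def rankPiece (I : Set ℕ) (q : ℕ) : Submodule K2 Lam :=
  Submodule.span K2
    {x | ∃ S : Finset ℕ, ↑S ⊆ I ∧ S.card = q ∧ x = Finsupp.single S (1 : K2)}

/-- `Λ^q_k`: the span of the monomials of rank `q` and degree (weight) `k`, indices in `I`. -/
noncomputable def gradedPiece (I : Set ℕ) (q k : ℕ) : Submodule K2 Lam :=
  Submodule.span K2
    {x | ∃ S : Finset ℕ, ↑S ⊆ I ∧ S.card = q ∧ S.sum id = k ∧ x = Finsupp.single S (1 : K2)}

/-- The cohomology class in `Z ⧸ (B ∩ Z)` of a cocycle `x ∈ Z` (defined to be `0` if `x ∉ Z`). -/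
noncomputable def cls (Z B : Submodule K2 Lam) (x : Lam) :
    ↥Z ⧸ Submodule.comap Z.subtype B := by
  classical exact if hx : x ∈ Z then Submodule.Quotient.mk ⟨x, hx⟩ else 0

/-- `F(ω, eⁱ) = Σ_{l ≥ 0} (Dˡ ω) ∧ e^{i+1+l}`, truncated at `l < N`; as soon as `D^N ω = 0`,
this is the full (finite) sum. -/
noncomputable def Ftrunc (D : Module.End K2 Lam) (N : ℕ) (ω : Lam) (i : ℕ) : Lam :=
  ∑ l ∈ Finset.range N, wedge ((D ^ l) ω) (e (i + 1 + l))

/-- The largest index `i_q` of a monomial `e^S`, `S = {i₁ < … < i_q}`. -/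
def maxIdx (S : Finset ℕ) : ℕ := S.sup id

/-- `F(e^S, eⁱ)` for a monomial `e^S`: since `D` lowers the degree by one, truncating the sum
at the degree of `e^S` already yields the full sum `Σ_{l ≥ 0} (Dˡ e^S) ∧ e^{i+1+l}`. -/
noncomputable def Fmono (D : Module.End K2 Lam) (S : Finset ℕ) (i : ℕ) : Lam :=
  Ftrunc D (S.sum id + 1) (Finsupp.single S 1) i

/-- `F(eⁱ, eⁱ) = eⁱ ∧ e^{i+1} + e^{i−1} ∧ e^{i+2} + ⋯ + e² ∧ e^{2i−1}`. -/
noncomputable def F1 (i : ℕ) : Lam :=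
  ∑ l ∈ Finset.range (i - 1), wedge (e (i - l)) (e (i + 1 + l))

/-! `D` acts on a monomial `e^T` by lowering one index `i ↦ i - 1` at a time (where `i ≥ 3` and
`i - 1 ∉ T`). For `ω = e^S` with top index `m`, `D F(ω, e^m)` telescopes to
`D^N ω ∧ e^{m+N} - ω ∧ e^m = 0`. The only monomial of `F(e^S, e^m)` whose two largest indices are
consecutive is `e^{S ∪ {m+1}}` (in the other terms the top index exceeds every other index by at
least two), which gives linear independence. Subtracting the matching combination of these
cocycles from a cocycle leaves a cocycle without monomials with consecutive top indices, and such
a cocycle `y` vanishes: if `T` is a monomial of `y` whose two largest indices are closest, the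
monomial obtained by lowering the top index of `T` arises from no other monomial of `y`, so it
occurs in `D y`. -/

theorem le_maxIdx {S : Finset ℕ} {i : ℕ} (h : i ∈ S) : i ≤ maxIdx S :=
  Finset.le_sup (f := id) h

theorem maxIdx_mem {S : Finset ℕ} (h : S.Nonempty) : maxIdx S ∈ S := by
  obtain ⟨b, hb, he⟩ := Finset.exists_mem_eq_sup S h id
  rw [maxIdx, he]
  exact hb

theorem maxIdx_insert_of_forall_le {a : ℕ} {S : Finset ℕ} (h : ∀ j ∈ S, j ≤ a) :
    maxIdx (insert a S) = a := by
  rw [maxIdx, Finset.sup_insert, id, sup_eq_left]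
  exact Finset.sup_le h

theorem maxIdx_add_one_notMem (S : Finset ℕ) : maxIdx S + 1 ∉ S :=
  fun h => by have := le_maxIdx h; omega

theorem insert_eq_insert_of_forall_lt {a b : ℕ} {A B : Finset ℕ} (hA : ∀ j ∈ A, j < a)
    (hB : ∀ j ∈ B, j < b) (h : insert a A = insert b B) : a = b ∧ A = B := by
  have hab : a = b := by
    have ha : a ∈ insert b B := h ▸ Finset.mem_insert_self a A
    have hb : b ∈ insert a A := h ▸ Finset.mem_insert_self b B
    rcases Finset.mem_insert.mp ha with ha | ha
    · exact ha
    rcases Finset.mem_insert.mp hb with hb | hb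
    · exact hb.symm
    have := hA b hb
    have := hB a ha
    omega
  subst hab
  refine ⟨rfl, ?_⟩
  rw [← Finset.erase_insert (fun h => (hA a h).false), h,
    Finset.erase_insert (fun h => (hB a h).false)]

def extendTop (S : Finset ℕ) : Finset ℕ := insert (maxIdx S + 1) S

theorem card_extendTop (S : Finset ℕ) : (extendTop S).card = S.card + 1 :=
  Finset.card_insert_of_notMem (maxIdx_add_one_notMem S)

theorem sum_extendTop (S : Finset ℕ) : (extendTop S).sum id = S.sum id + maxIdx S + 1 := by
  rw [extendTop, Finset.sum_insert (maxIdx_add_one_notMem S), id, add_comm, add_assoc]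

theorem extendTop_injective : Function.Injective extendTop := fun _ _ h =>
  (insert_eq_insert_of_forall_lt (fun _ hj => Nat.lt_succ_of_le (le_maxIdx hj))
    (fun _ hj => Nat.lt_succ_of_le (le_maxIdx hj)) h).2

theorem maxIdx_extendTop (S : Finset ℕ) : maxIdx (extendTop S) = maxIdx S + 1 :=
  maxIdx_insert_of_forall_le fun _ hj => (le_maxIdx hj).trans (Nat.le_succ _)

theorem maxIdx_extendTop_sub_one_mem {S : Finset ℕ} (h : S.Nonempty) :
    maxIdx (extendTop S) - 1 ∈ extendTop S := by
  rw [maxIdx_extendTop, Nat.add_sub_cancel]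
  exact Finset.mem_insert_of_mem (maxIdx_mem h)

theorem extendTop_erase_maxIdx {T : Finset ℕ} (hT : maxIdx T - 1 ∈ T) (hpos : maxIdx T ≠ 0) :
    extendTop (T.erase (maxIdx T)) = T := by
  have hmax : maxIdx (T.erase (maxIdx T)) = maxIdx T - 1 := by
    refine le_antisymm (Finset.sup_le fun j hj => ?_)
      (le_maxIdx (Finset.mem_erase.mpr ⟨by omega, hT⟩))
    have := le_maxIdx (Finset.mem_of_mem_erase hj)
    have := Finset.ne_of_mem_erase hj
    simp only [id_eq]
    omega
  rw [extendTop, hmax, Nat.sub_add_cancel (Nat.one_le_iff_ne_zero.mpr hpos),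
    Finset.insert_erase (maxIdx_mem ⟨_, hT⟩)]

def sndIdx (T : Finset ℕ) : ℕ := maxIdx (T.erase (maxIdx T))

theorem le_sndIdx {T : Finset ℕ} {i : ℕ} (hi : i ∈ T) (hne : i ≠ maxIdx T) : i ≤ sndIdx T :=
  le_maxIdx (Finset.mem_erase.mpr ⟨hne, hi⟩)

theorem sndIdx_mem_erase {T : Finset ℕ} (h : 2 ≤ T.card) : sndIdx T ∈ T.erase (maxIdx T) := by
  refine maxIdx_mem (Finset.card_pos.mp ?_)
  rw [Finset.card_erase_of_mem (maxIdx_mem (Finset.card_pos.mp (by omega)))]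
  omega

def shiftDown (i : ℕ) (S : Finset ℕ) : Finset ℕ := insert (i - 1) (S.erase i)

theorem card_shiftDown {i : ℕ} {S : Finset ℕ} (hi : i ∈ S) (hi1 : i - 1 ∉ S) :
    (shiftDown i S).card = S.card := by
  rw [shiftDown, Finset.card_insert_of_notMem (fun h => hi1 (Finset.mem_of_mem_erase h)),
    Finset.card_erase_add_one hi]

theorem sum_shiftDown {i : ℕ} {S : Finset ℕ} (hi : i ∈ S) (hi1 : i - 1 ∉ S) :
    (shiftDown i S).sum id + 1 = S.sum id := by
  have hi0 : i ≠ 0 := by rintro rfl; exact hi1 hi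
  rw [shiftDown, Finset.sum_insert (fun h => hi1 (Finset.mem_of_mem_erase h)),
    ← Finset.add_sum_erase S id hi]
  simp only [id_eq]
  omega

theorem lt_maxIdx_sub_one_of_mem_erase {T : Finset ℕ} {j : ℕ} (h1 : maxIdx T - 1 ∉ T)
    (hj : j ∈ T.erase (maxIdx T)) : j < maxIdx T - 1 := by
  have := le_maxIdx (Finset.mem_of_mem_erase hj)
  have := Finset.ne_of_mem_erase hj
  have : j ≠ maxIdx T - 1 := fun hj' => h1 (hj' ▸ Finset.mem_of_mem_erase hj)
  omega

theorem shiftDown_singleton (i : ℕ) : shiftDown i {i} = {i - 1} := by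
  simp [shiftDown]

theorem eq_of_shiftDown_maxIdx_eq {T T' : Finset ℕ} (hT : T.Nonempty) (hT' : T'.Nonempty)
    (h1 : maxIdx T - 1 ∉ T) (h1' : maxIdx T' - 1 ∉ T')
    (h : shiftDown (maxIdx T') T' = shiftDown (maxIdx T) T) : T' = T := by
  obtain ⟨hM, hE⟩ := insert_eq_insert_of_forall_lt
    (fun _ => lt_maxIdx_sub_one_of_mem_erase h1') (fun _ => lt_maxIdx_sub_one_of_mem_erase h1) h
  have hMM : maxIdx T' = maxIdx T := by
    have : maxIdx T ≠ 0 := fun h0 => h1 (h0 ▸ maxIdx_mem hT)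
    have : maxIdx T' ≠ 0 := fun h0 => h1' (h0 ▸ maxIdx_mem hT')
    omega
  rw [← Finset.insert_erase (maxIdx_mem hT'), hE, hMM, Finset.insert_erase (maxIdx_mem hT)]

theorem maxIdx_sub_sndIdx_lt_of_shiftDown_eq {T T' : Finset ℕ} {j : ℕ} (hT : 2 ≤ T.card)
    (hgap : sndIdx T + 2 ≤ maxIdx T) (hj : j ∈ T') (hjM : j ≠ maxIdx T')
    (h : shiftDown j T' = shiftDown (maxIdx T) T) :
    maxIdx T' - sndIdx T' < maxIdx T - sndIdx T := by
  set M := maxIdx T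
  set s := sndIdx T
  set M' := maxIdx T'
  have hM' : M' ∈ T' := maxIdx_mem ⟨j, hj⟩
  have hsE : s ∈ T.erase M := sndIdx_mem_erase hT
  have hlowT : ∀ i ∈ shiftDown M T, i ≤ M - 1 := fun i hi => by
    rcases Finset.mem_insert.mp hi with rfl | hi
    · rfl
    · have := le_sndIdx (Finset.mem_of_mem_erase hi) (Finset.ne_of_mem_erase hi)
      omega
  have hlowT' : ∀ i ∈ shiftDown j T', i ≤ M' := fun i hi => by
    rcases Finset.mem_insert.mp hi with rfl | hi
    · have := le_maxIdx hj
      omega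
    · exact le_maxIdx (Finset.mem_of_mem_erase hi)
  have hM'le : M' ≤ M - 1 :=
    hlowT _ (h ▸ Finset.mem_insert_of_mem (Finset.mem_erase.mpr ⟨Ne.symm hjM, hM'⟩))
  have hMle : M - 1 ≤ M' := hlowT' _ (h ▸ Finset.mem_insert_self _ _)
  have hss' : s ≤ sndIdx T' := by
    have hs : s ∈ shiftDown j T' := h ▸ Finset.mem_insert_of_mem hsE
    rcases Finset.mem_insert.mp hs with hsj | hs
    · have := le_sndIdx hj hjM
      omega
    · exact le_sndIdx (Finset.mem_of_mem_erase hs) (by omega)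
  omega

theorem mem_gradedPiece_iff {I : Set ℕ} {q k : ℕ} {x : Lam} :
    x ∈ gradedPiece I q k ↔ ∀ T, x T ≠ 0 → ↑T ⊆ I ∧ T.card = q ∧ T.sum id = k := by
  have : gradedPiece I q k
      = Finsupp.supported K2 K2 {T : Finset ℕ | ↑T ⊆ I ∧ T.card = q ∧ T.sum id = k} := by
    rw [gradedPiece, Finsupp.supported_eq_span_single]
    congr 1
    ext x
    simp [eq_comm, and_assoc]
  rw [this, Finsupp.mem_supported']
  exact forall_congr' fun T => not_imp_comm

theorem mem_rankPiece_iff {I : Set ℕ} {q : ℕ} {x : Lam} :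
    x ∈ rankPiece I q ↔ ∀ T, x T ≠ 0 → ↑T ⊆ I ∧ T.card = q := by
  have : rankPiece I q = Finsupp.supported K2 K2 {T : Finset ℕ | ↑T ⊆ I ∧ T.card = q} := by
    rw [rankPiece, Finsupp.supported_eq_span_single]
    congr 1
    ext x
    simp [eq_comm, and_assoc]
  rw [this, Finsupp.mem_supported']
  exact forall_congr' fun T => not_imp_comm

theorem Lam.neg_eq_self (y : Lam) : -y = y := by
  ext U
  exact CharTwo.neg_eq _

theorem wedge_single_left (S : Finset ℕ) (a : K2) (y : Lam) :
    wedge (Finsupp.single S a) y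
      = y.sum fun T b => if Disjoint S T then Finsupp.single (S ∪ T) (a * b) else 0 := by
  unfold wedge
  rw [Finsupp.sum_single_index]
  simp [Finsupp.sum]

theorem wedge_single_right (x : Lam) (T : Finset ℕ) (b : K2) :
    wedge x (Finsupp.single T b)
      = x.sum fun S a => if Disjoint S T then Finsupp.single (S ∪ T) (a * b) else 0 := by
  unfold wedge
  refine Finsupp.sum_congr fun S _ => ?_
  rw [Finsupp.sum_single_index]
  simp

theorem wedge_single_single (S T : Finset ℕ) (a b : K2) :
    wedge (Finsupp.single S a) (Finsupp.single T b)
      = if Disjoint S T then Finsupp.single (S ∪ T) (a * b) else 0 := by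
  rw [wedge_single_left, Finsupp.sum_single_index]
  simp

theorem wedge_zero_left (y : Lam) : wedge 0 y = 0 := by
  simp [wedge]

theorem wedge_zero_right (x : Lam) : wedge x 0 = 0 := by
  simp [wedge]

theorem wedge_add_right (x y z : Lam) : wedge x (y + z) = wedge x y + wedge x z := by
  unfold wedge
  rw [← Finsupp.sum_add]
  refine Finsupp.sum_congr fun S _ => ?_
  rw [Finsupp.sum_add_index']
  · intro T; simp
  · intro T a b; split <;> simp [mul_add, Finsupp.single_add]

theorem wedge_sum_right {α : Type*} (x : Lam) (s : Finset α) (f : α → Lam) :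
    wedge x (∑ i ∈ s, f i) = ∑ i ∈ s, wedge x (f i) :=
  map_sum (AddMonoidHom.mk' (wedge x) (wedge_add_right x)) f s

theorem wedge_one_left (x : Lam) : wedge (Finsupp.single ∅ 1) x = x := by
  simp [wedge_single_left]

theorem wedge_one_right (x : Lam) : wedge x (Finsupp.single ∅ 1) = x := by
  simp [wedge_single_right]

theorem e_wedge_single (a : ℕ) (S : Finset ℕ) :
    wedge (e a) (Finsupp.single S 1) = if a ∈ S then 0 else Finsupp.single (insert a S) 1 := by
  simp [e, wedge_single_single]

theorem single_wedge_e (S : Finset ℕ) (j : ℕ) :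
    wedge (Finsupp.single S 1) (e j) = if j ∈ S then 0 else Finsupp.single (insert j S) 1 := by
  simp [e, wedge_single_single]

theorem exists_of_wedge_e_apply_ne_zero {x : Lam} {j : ℕ} {U : Finset ℕ}
    (h : wedge x (e j) U ≠ 0) : ∃ T, x T ≠ 0 ∧ j ∉ T ∧ U = insert j T := by
  rw [e, wedge_single_right, Finsupp.sum_apply] at h
  obtain ⟨T, hT, hne⟩ := Finset.exists_ne_zero_of_sum_ne_zero h
  refine ⟨T, Finsupp.mem_support_iff.mp hT, ?_⟩
  dsimp only at hne
  split_ifs at hne with hd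
  · rw [Finsupp.single_apply] at hne
    split_ifs at hne with hU
    · exact ⟨by simpa using hd, by rw [← hU, Finset.union_comm, ← Finset.insert_eq]⟩
    · exact absurd rfl hne
  · exact absurd rfl hne

theorem IsDerivation.map_one {D : Module.End K2 Lam} (hD : IsDerivation D) :
    D (Finsupp.single ∅ 1) = 0 := by
  have h := hD (Finsupp.single ∅ 1) (Finsupp.single ∅ 1)
  rwa [wedge_one_right, wedge_one_right, wedge_one_left, left_eq_add] at h

structure IsLoweringDerivation (D : Module.End K2 Lam) : Prop where
  isDerivation : IsDerivation D
  map_e_two : D (e 2) = 0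
  map_e : ∀ i, 3 ≤ i → D (e i) = e (i - 1)

noncomputable def lowerTerm (i : ℕ) (S : Finset ℕ) : Lam :=
  if 3 ≤ i ∧ i - 1 ∉ S then Finsupp.single (shiftDown i S) 1 else 0

theorem lowerTerm_apply (i : ℕ) (S U : Finset ℕ) :
    lowerTerm i S U = if 3 ≤ i ∧ i - 1 ∉ S ∧ shiftDown i S = U then 1 else 0 := by
  unfold lowerTerm
  split_ifs <;> simp_all

theorem e_wedge_lowerTerm {a i : ℕ} {S : Finset ℕ} (ha : a ∉ S) (hi : i ∈ S) :
    wedge (e a) (lowerTerm i S) = lowerTerm i (insert a S) := by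
  have hia : i ≠ a := by rintro rfl; exact ha hi
  unfold lowerTerm
  by_cases hcond : 3 ≤ i ∧ i - 1 ∉ S
  · by_cases hai : a = i - 1
    · simp [hcond, hai, e_wedge_single, shiftDown]
    · have ha' : a ∉ shiftDown i S := by simp [shiftDown, hai, ha]
      rw [if_pos hcond, e_wedge_single, if_neg ha', if_pos (by simp [hcond, Ne.symm hai]),
        shiftDown, shiftDown, Finset.erase_insert_of_ne (Ne.symm hia), Finset.insert_comm]
  · rw [if_neg hcond, wedge_zero_right, if_neg (by simp_all)]

theorem IsLoweringDerivation.map_e_wedge_single {D : Module.End K2 Lam}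
    (hD : IsLoweringDerivation D) {a : ℕ} {S : Finset ℕ} (ha : a ∉ S) (ha2 : 2 ≤ a) :
    wedge (D (e a)) (Finsupp.single S 1) = lowerTerm a (insert a S) := by
  rcases ha2.eq_or_lt with rfl | ha3
  · rw [hD.map_e_two, wedge_zero_left, lowerTerm, if_neg (by omega)]
  · rw [hD.map_e a ha3, e_wedge_single, lowerTerm, shiftDown, Finset.erase_insert ha]
    by_cases h : a - 1 ∈ S
    · rw [if_pos h, if_neg fun hc => hc.2 (Finset.mem_insert_of_mem h)]
    · rw [if_neg h, if_pos ⟨ha3, by rw [Finset.mem_insert, not_or]; exact ⟨by omega, h⟩⟩]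

theorem IsLoweringDerivation.map_single {D : Module.End K2 Lam} (hD : IsLoweringDerivation D)
    {S : Finset ℕ} (hS : ∀ i ∈ S, 2 ≤ i) :
    D (Finsupp.single S 1) = ∑ i ∈ S, lowerTerm i S := by
  induction S using Finset.induction_on with
  | empty => simp [hD.isDerivation.map_one]
  | @insert a S ha ih =>
    have hS' : ∀ i ∈ S, 2 ≤ i := fun i hi => hS i (Finset.mem_insert_of_mem hi)
    have hsplit := e_wedge_single a S
    rw [if_neg ha] at hsplit
    rw [← hsplit, hD.isDerivation, ih hS', wedge_sum_right,
      hD.map_e_wedge_single ha (hS a (Finset.mem_insert_self a S)), Finset.sum_insert ha,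
      Finset.sum_congr rfl fun i hi => e_wedge_lowerTerm ha hi]

theorem IsLoweringDerivation.apply_eq_sum {D : Module.End K2 Lam} (hD : IsLoweringDerivation D)
    {y : Lam} (hy : ∀ T, y T ≠ 0 → ∀ i ∈ T, 2 ≤ i) (U : Finset ℕ) :
    D y U = ∑ T ∈ y.support, y T * ∑ i ∈ T, lowerTerm i T U := by
  conv_lhs => rw [← Finsupp.sum_single y]
  rw [map_finsuppSum, Finsupp.sum_apply]
  refine Finset.sum_congr rfl fun T hT => ?_
  dsimp only
  rw [← Finsupp.smul_single_one, map_smul,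
    hD.map_single (hy T (Finsupp.mem_support_iff.mp hT)), Finsupp.smul_apply, smul_eq_mul,
    Finset.sum_apply']

theorem IsLoweringDerivation.exists_of_apply_ne_zero {D : Module.End K2 Lam}
    (hD : IsLoweringDerivation D) {y : Lam} (hy : ∀ T, y T ≠ 0 → ∀ i ∈ T, 2 ≤ i)
    {U : Finset ℕ} (h : D y U ≠ 0) :
    ∃ T, y T ≠ 0 ∧ ∃ i ∈ T, 3 ≤ i ∧ i - 1 ∉ T ∧ shiftDown i T = U := by
  rw [hD.apply_eq_sum hy] at h
  obtain ⟨T, hT, hne⟩ := Finset.exists_ne_zero_of_sum_ne_zero h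
  obtain ⟨i, hi, hne'⟩ := Finset.exists_ne_zero_of_sum_ne_zero (right_ne_zero_of_mul hne)
  rw [lowerTerm_apply] at hne'
  split_ifs at hne' with hcond
  · exact ⟨T, Finsupp.mem_support_iff.mp hT, i, hi, hcond⟩
  · exact absurd rfl hne'

theorem IsLoweringDerivation.apply_shiftDown {D : Module.End K2 Lam}
    (hD : IsLoweringDerivation D) {y : Lam} (hy : ∀ T, y T ≠ 0 → ∀ i ∈ T, 2 ≤ i)
    {T : Finset ℕ} {i : ℕ} (hi : i ∈ T) (hi3 : 3 ≤ i) (hi1 : i - 1 ∉ T)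
    (huniq : ∀ T', y T' ≠ 0 → ∀ j ∈ T', j - 1 ∉ T' →
      shiftDown j T' = shiftDown i T → T' = T ∧ j = i) :
    D y (shiftDown i T) = y T := by
  rw [hD.apply_eq_sum hy]
  refine (Finset.sum_eq_single T (fun T' hT' hne => ?_) (fun hT => ?_)).trans ?_
  · refine mul_eq_zero_of_right _ (Finset.sum_eq_zero fun j hj => ?_)
    rw [lowerTerm_apply, if_neg]
    rintro ⟨-, hj1, heq⟩
    exact hne (huniq T' (Finsupp.mem_support_iff.mp hT') j hj hj1 heq).1
  · rw [Finsupp.notMem_support_iff.mp hT, zero_mul]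
  · by_cases hT : y T = 0
    · rw [hT, zero_mul]
    rw [Finset.sum_eq_single i (fun j hj hji => ?_) (fun h => absurd hi h), lowerTerm_apply,
      if_pos ⟨hi3, hi1, rfl⟩, mul_one]
    rw [lowerTerm_apply, if_neg]
    rintro ⟨-, hj1, heq⟩
    exact hji (huniq T hT j hj hj1 heq).2

theorem IsLoweringDerivation.pow_apply_ne_zero {D : Module.End K2 Lam}
    (hD : IsLoweringDerivation D) {S : Finset ℕ} (hS : ∀ i ∈ S, 2 ≤ i) (l : ℕ) {U : Finset ℕ}
    (h : (D ^ l) (Finsupp.single S 1) U ≠ 0) :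
    (∀ i ∈ U, 2 ≤ i ∧ i ≤ maxIdx S) ∧ U.card = S.card ∧ U.sum id + l = S.sum id := by
  induction l generalizing U with
  | zero =>
    rw [pow_zero, Module.End.one_apply, Finsupp.single_apply] at h
    split_ifs at h with hSU
    · subst hSU
      exact ⟨fun i hi => ⟨hS i hi, le_maxIdx hi⟩, rfl, rfl⟩
    · exact absurd rfl h
  | succ l ih =>
    rw [pow_succ', Module.End.mul_apply] at h
    obtain ⟨T, hT, i, hi, hi3, hi1, rfl⟩ :=
      hD.exists_of_apply_ne_zero (fun T hT i hi => ((ih hT).1 i hi).1) h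
    obtain ⟨hTi, hTc, hTs⟩ := ih hT
    have hsum := sum_shiftDown hi hi1
    refine ⟨fun j hj => ?_, (card_shiftDown hi hi1).trans hTc, by omega⟩
    rcases Finset.mem_insert.mp hj with rfl | hj
    · have := hTi i hi
      omega
    · exact hTi j (Finset.mem_of_mem_erase hj)

theorem IsLoweringDerivation.pow_sum_add_one_apply {D : Module.End K2 Lam}
    (hD : IsLoweringDerivation D) {S : Finset ℕ} (hS : ∀ i ∈ S, 2 ≤ i) :
    (D ^ (S.sum id + 1)) (Finsupp.single S 1) = 0 := by
  ext U
  by_contra h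
  have := (hD.pow_apply_ne_zero hS _ h).2.2
  omega

theorem IsLoweringDerivation.map_Fmono {D : Module.End K2 Lam} (hD : IsLoweringDerivation D)
    {S : Finset ℕ} (hS : ∀ i ∈ S, 2 ≤ i) (hne : S.Nonempty) :
    D (Fmono D S (maxIdx S)) = 0 := by
  set m := maxIdx S
  have hmS : m ∈ S := maxIdx_mem hne
  have hm : 2 ≤ m := hS m hmS
  set v : ℕ → Lam := fun l => wedge ((D ^ l) (Finsupp.single S 1)) (e (m + l))
  have hstep (l : ℕ) :
      D (wedge ((D ^ l) (Finsupp.single S 1)) (e (m + 1 + l))) = v (l + 1) - v l := by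
    rw [hD.isDerivation, ← Module.End.mul_apply, ← pow_succ', hD.map_e _ (by omega),
      sub_eq_add_neg, Lam.neg_eq_self, show m + 1 + l - 1 = m + l by omega,
      show m + 1 + l = m + (l + 1) by omega]
  rw [Fmono, Ftrunc, map_sum, Finset.sum_congr rfl fun l _ => hstep l, Finset.sum_range_sub]
  simp only [v, hD.pow_sum_add_one_apply hS, wedge_zero_left, pow_zero, Module.End.one_apply,
    add_zero, single_wedge_e, if_pos hmS, sub_self]

theorem IsLoweringDerivation.Fmono_apply_of_maxIdx_sub_one_mem {D : Module.End K2 Lam}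
    (hD : IsLoweringDerivation D) {S : Finset ℕ} (hS : ∀ i ∈ S, 2 ≤ i)
    {T : Finset ℕ} (hT : maxIdx T - 1 ∈ T) :
    Fmono D S (maxIdx S) T = if extendTop S = T then 1 else 0 := by
  set m := maxIdx S
  have hhigher (l : ℕ) :
      wedge ((D ^ (l + 1)) (Finsupp.single S 1)) (e (m + 1 + (l + 1))) T = 0 := by
    by_contra h
    obtain ⟨U, hU, hjU, rfl⟩ := exists_of_wedge_e_apply_ne_zero h
    have hUle : ∀ i ∈ U, i ≤ m := fun i hi => ((hD.pow_apply_ne_zero hS _ hU).1 i hi).2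
    rw [maxIdx_insert_of_forall_le fun i hi => by have := hUle i hi; omega] at hT
    rcases Finset.mem_insert.mp hT with h | h
    · omega
    · have := hUle _ h
      omega
  rw [Fmono, Ftrunc, Finset.sum_apply', Finset.sum_range_succ',
    Finset.sum_eq_zero fun l _ => hhigher l,
    zero_add, pow_zero, Module.End.one_apply, add_zero, single_wedge_e,
    if_neg (maxIdx_add_one_notMem S), Finsupp.single_apply, extendTop]

theorem IsLoweringDerivation.Fmono_mem_gradedPiece {D : Module.End K2 Lam}
    (hD : IsLoweringDerivation D) {S : Finset ℕ} (hS : ∀ i ∈ S, 2 ≤ i) (hne : S.Nonempty) :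
    Fmono D S (maxIdx S) ∈ gradedPiece {i | 2 ≤ i} (S.card + 1) (S.sum id + maxIdx S + 1) := by
  have hm : 2 ≤ maxIdx S := hS _ (maxIdx_mem hne)
  rw [mem_gradedPiece_iff]
  intro U hU
  rw [Fmono, Ftrunc, Finset.sum_apply'] at hU
  obtain ⟨l, -, hl⟩ := Finset.exists_ne_zero_of_sum_ne_zero hU
  obtain ⟨T, hT, hjT, rfl⟩ := exists_of_wedge_e_apply_ne_zero hl
  obtain ⟨hTi, hTc, hTs⟩ := hD.pow_apply_ne_zero hS l hT
  refine ⟨fun i hi => ?_, by rw [Finset.card_insert_of_notMem hjT, hTc], ?_⟩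
  · rcases Finset.mem_insert.mp hi with rfl | hi
    · show 2 ≤ maxIdx S + 1 + l
      omega
    · exact (hTi i hi).1
  · rw [Finset.sum_insert hjT]
    simp only [id_eq] at hTs ⊢
    omega

def basisIndex (q k : ℕ) : Set (Finset ℕ) :=
  {S | (∀ i ∈ S, 2 ≤ i) ∧ S.card = q ∧ S.sum id + maxIdx S + 1 = k}

theorem IsLoweringDerivation.linearIndependent_Fmono {D : Module.End K2 Lam}
    (hD : IsLoweringDerivation D) {q k : ℕ} (hq : 1 ≤ q) :
    LinearIndependent K2 fun S : basisIndex q k => Fmono D S.1 (maxIdx S.1) := by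
  have hcoeff (S S' : basisIndex q k) :
      Finsupp.lapply (R := K2) (extendTop S.1) (Fmono D S'.1 (maxIdx S'.1))
        = if S' = S then 1 else 0 := by
    have hne : S.1.Nonempty := Finset.card_pos.mp (by rw [S.2.2.1]; omega)
    simp only [Finsupp.lapply_apply, hD.Fmono_apply_of_maxIdx_sub_one_mem S'.2.1
      (maxIdx_extendTop_sub_one_mem hne), extendTop_injective.eq_iff, Subtype.coe_inj]
  exact .of_pairwise_dual_eq_zero_one _ (fun S => Finsupp.lapply (R := K2) (extendTop S.1))
    (fun S S' h => (hcoeff S S').trans (if_neg (Ne.symm h)))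
    fun S => (hcoeff S S).trans (if_pos rfl)

theorem IsLoweringDerivation.eq_zero_of_maxIdx_sub_one_notMem {D : Module.End K2 Lam}
    (hD : IsLoweringDerivation D) {y : Lam} (hy : ∀ T, y T ≠ 0 → (∀ i ∈ T, 2 ≤ i) ∧ 2 ≤ T.card)
    (hker : D y = 0) (htop : ∀ T, y T ≠ 0 → maxIdx T - 1 ∉ T) : y = 0 := by
  by_contra hy0
  obtain ⟨T, hTsupp, hmin⟩ := y.support.exists_min_image (fun T => maxIdx T - sndIdx T)
    (Finsupp.support_nonempty_iff.mpr hy0)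
  have hT : y T ≠ 0 := Finsupp.mem_support_iff.mp hTsupp
  obtain ⟨hT2, hTcard⟩ := hy T hT
  have hsE := sndIdx_mem_erase hTcard
  have hs2 := hT2 _ (Finset.mem_of_mem_erase hsE)
  have hgap : sndIdx T + 2 ≤ maxIdx T := by
    have := lt_maxIdx_sub_one_of_mem_erase (htop T hT) hsE
    omega
  have hTne : T.Nonempty := ⟨_, Finset.mem_of_mem_erase hsE⟩
  have hcoeff := hD.apply_shiftDown (fun T hT => (hy T hT).1) (maxIdx_mem hTne) (by omega)
    (htop T hT) fun T' hT' j hj hj1 h => by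
      by_cases hjM : j = maxIdx T'
      · subst hjM
        obtain rfl := eq_of_shiftDown_maxIdx_eq hTne ⟨_, hj⟩ (htop T hT) hj1 h
        exact ⟨rfl, rfl⟩
      · exact absurd (hmin T' (Finsupp.mem_support_iff.mpr hT'))
          (not_le.mpr (maxIdx_sub_sndIdx_lt_of_shiftDown_eq hTcard hgap hj hjM h))
  rw [hker] at hcoeff
  exact hT hcoeff.symm

theorem IsLoweringDerivation.exists_mem_span_Fmono_eq_on_top {D : Module.End K2 Lam}
    (hD : IsLoweringDerivation D) {q k : ℕ} {x : Lam}
    (hx : x ∈ gradedPiece {i | 2 ≤ i} (q + 1) k) :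
    ∃ z ∈ Submodule.span K2 (Set.range fun S : basisIndex q k => Fmono D S.1 (maxIdx S.1)),
      ∀ T, maxIdx T - 1 ∈ T → z T = x T := by
  rw [mem_gradedPiece_iff] at hx
  set 𝒯 := x.support.filter fun T => maxIdx T - 1 ∈ T
  have hbase (T : Finset ℕ) (hT : T ∈ 𝒯) :
      T.erase (maxIdx T) ∈ basisIndex q k ∧ extendTop (T.erase (maxIdx T)) = T := by
    obtain ⟨hTx, hT1⟩ := Finset.mem_filter.mp hT
    obtain ⟨hT2, hcard, hsum⟩ := hx T (Finsupp.mem_support_iff.mp hTx)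
    have hext := extendTop_erase_maxIdx hT1 (by have : 2 ≤ maxIdx T - 1 := hT2 hT1; omega)
    have hcard' := card_extendTop (T.erase (maxIdx T))
    have hsum' := sum_extendTop (T.erase (maxIdx T))
    rw [hext] at hcard' hsum'
    exact ⟨⟨fun i hi => hT2 (Finset.mem_of_mem_erase hi), by omega, by omega⟩, hext⟩
  refine ⟨∑ T ∈ 𝒯, x T • Fmono D (T.erase (maxIdx T)) (maxIdx (T.erase (maxIdx T))),
    Submodule.sum_mem _ fun T hT => Submodule.smul_mem _ _
      (Submodule.subset_span ⟨⟨_, (hbase T hT).1⟩, rfl⟩), fun T' hT' => ?_⟩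
  have hterm (T : Finset ℕ) (hT : T ∈ 𝒯) :
      (x T • Fmono D (T.erase (maxIdx T)) (maxIdx (T.erase (maxIdx T)))) T'
        = if T = T' then x T else 0 := by
    rw [Finsupp.smul_apply, hD.Fmono_apply_of_maxIdx_sub_one_mem (hbase T hT).1.1 hT',
      (hbase T hT).2, smul_ite, smul_eq_mul, mul_one, smul_zero]
  rw [Finset.sum_apply', Finset.sum_congr rfl hterm, Finset.sum_ite_eq']
  split_ifs with h
  · rfl
  · by_contra hne
    exact h (Finset.mem_filter.mpr ⟨Finsupp.mem_support_iff.mpr (Ne.symm hne), hT'⟩)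

theorem IsLoweringDerivation.span_Fmono_eq {D : Module.End K2 Lam} (hD : IsLoweringDerivation D)
    {q k : ℕ} (hq : 1 ≤ q) :
    Submodule.span K2 (Set.range fun S : basisIndex q k => Fmono D S.1 (maxIdx S.1))
      = gradedPiece {i | 2 ≤ i} (q + 1) k ⊓ LinearMap.ker D := by
  have hle : Submodule.span K2 (Set.range fun S : basisIndex q k => Fmono D S.1 (maxIdx S.1))
      ≤ gradedPiece {i | 2 ≤ i} (q + 1) k ⊓ LinearMap.ker D := by
    rw [Submodule.span_le]
    rintro _ ⟨⟨S, hS, hcard, hsum⟩, rfl⟩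
    have hne : S.Nonempty := Finset.card_pos.mp (by omega)
    have hmem := hD.Fmono_mem_gradedPiece hS hne
    rw [hcard, hsum] at hmem
    exact ⟨hmem, hD.map_Fmono hS hne⟩
  refine le_antisymm hle fun x hx => ?_
  obtain ⟨z, hz, hzx⟩ := hD.exists_mem_span_Fmono_eq_on_top hx.1
  have hxz : x - z ∈ gradedPiece {i | 2 ≤ i} (q + 1) k ⊓ LinearMap.ker D := sub_mem hx (hle hz)
  have hdiff : x - z = 0 := by
    refine hD.eq_zero_of_maxIdx_sub_one_notMem (fun T hT => ?_) hxz.2 fun T hT h => ?_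
    · obtain ⟨hT2, hcard, -⟩ := mem_gradedPiece_iff.mp hxz.1 T hT
      exact ⟨fun i hi => hT2 hi, by omega⟩
    · rw [Finsupp.sub_apply, hzx T h, sub_self] at hT
      exact hT rfl
  rwa [sub_eq_zero.mp hdiff]

theorem IsLoweringDerivation.rankPiece_one_inf_ker {D : Module.End K2 Lam}
    (hD : IsLoweringDerivation D) :
    rankPiece {i | 2 ≤ i} 1 ⊓ LinearMap.ker D = Submodule.span K2 {e 2} := by
  refine le_antisymm (fun x hx => ?_) ?_
  · have hsingle (T : Finset ℕ) (hT : x T ≠ 0) : ∃ j, 2 ≤ j ∧ T = {j} := by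
      obtain ⟨hT2, hcard⟩ := mem_rankPiece_iff.mp hx.1 T hT
      obtain ⟨j, rfl⟩ := Finset.card_eq_one.mp hcard
      exact ⟨j, hT2 (Finset.mem_singleton_self j), rfl⟩
    have hvanish (j : ℕ) (hj : 3 ≤ j) : x {j} = 0 := by
      have hcoeff := hD.apply_shiftDown (y := x) (i := j)
        (fun T hT i hi => by obtain ⟨j, hj, rfl⟩ := hsingle T hT; rwa [Finset.mem_singleton.mp hi])
        (Finset.mem_singleton_self j) hj (by rw [Finset.mem_singleton]; omega)
        fun T' hT' i hi _ h => by
          obtain ⟨i', -, rfl⟩ := hsingle T' hT'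
          obtain rfl := Finset.mem_singleton.mp hi
          rw [shiftDown_singleton, shiftDown_singleton, Finset.singleton_inj] at h
          obtain rfl : i = j := by omega
          exact ⟨rfl, rfl⟩
      rw [hx.2, Finsupp.zero_apply] at hcoeff
      exact hcoeff.symm
    have hx2 : x = x {2} • e 2 := by
      ext T
      rw [e, Finsupp.smul_apply, Finsupp.single_apply]
      split_ifs with hT
      · rw [← hT, smul_eq_mul, mul_one]
      · by_contra hne
        obtain ⟨j, hj, rfl⟩ := hsingle T hne
        exact hne (by rw [hvanish j (hj.lt_of_ne fun h => hT (by rw [h])), smul_zero])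
    rw [hx2]
    exact Submodule.smul_mem _ _ (Submodule.mem_span_singleton_self _)
  · rw [Submodule.span_singleton_le_iff_mem]
    refine ⟨mem_rankPiece_iff.mpr fun T hT => ?_, hD.map_e_two⟩
    rw [e, Finsupp.single_apply, ite_ne_right_iff] at hT
    rw [← hT.1]
    simp

/-- Lemma: let `D` be the unique derivation of `Λ(h*) = Λ(e²,e³,…)` with `D e² = 0` and
`D eⁱ = e^{i−1}` for `i > 2`. For every `q ≥ 1` and every `k`, the elements
`F(e^{i₁} ∧ ⋯ ∧ e^{i_q}, e^{i_q})` with `2 ≤ i₁ < ⋯ < i_q` and `i₁ + ⋯ + i_q + i_q + 1 = k`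
(indexed below by the sets `S = {i₁ < ⋯ < i_q}`) form a basis of the kernel of the restriction
of `D` to `Λ^{q+1}_k(h*)`; moreover the kernel of the restriction of `D` to `h* = Λ¹(h*)` is
spanned by `e²`. -/
theorem ker_D_graded_basis (D : Module.End K2 Lam)
    (hD : IsDerivation D) (hD2 : D (e 2) = 0)
    (hDi : ∀ i, 3 ≤ i → D (e i) = e (i - 1)) :
    (∀ q k : ℕ, 1 ≤ q →
      LinearIndependent K2
        (fun S : {S : Finset ℕ // (∀ i ∈ S, 2 ≤ i) ∧ S.card = q ∧ S.sum id + maxIdx S + 1 = k}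
          => Fmono D S.1 (maxIdx S.1)) ∧
      Submodule.span K2 (Set.range
        (fun S : {S : Finset ℕ // (∀ i ∈ S, 2 ≤ i) ∧ S.card = q ∧ S.sum id + maxIdx S + 1 = k}
          => Fmono D S.1 (maxIdx S.1)))
        = gradedPiece {i : ℕ | 2 ≤ i} (q + 1) k ⊓ LinearMap.ker D) ∧
    rankPiece {i : ℕ | 2 ≤ i} 1 ⊓ LinearMap.ker D = Submodule.span K2 {e 2} := by
  have hL : IsLoweringDerivation D := ⟨hD, hD2, hDi⟩
  exact ⟨fun q k hq => ⟨hL.linearIndependent_Fmono hq, hL.span_Fmono_eq hq⟩,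
    hL.rankPiece_one_inf_ker⟩
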